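/- On ℂ² × ℂ² with the canonical Poisson structure, the matrix entries of g(z,z̃) mutually Poisson-commute: {g_{AB}, g_{CD}} = 0 for all A,B,C,D ∈ {0,1}, on the locus ⟨z|z⟩ = ⟨z̃|z̃⟩ ≠ 0. -/

import Mathlib

open BigOperators Matrix

noncomputable section

abbrev V : Type := Fin 2 → ℂ

/-- The Pauli matrices. -/
def pauli : Fin 3 → Matrix (Fin 2) (Fin 2) ℂ
  | 0 => !![0, 1; 1, 0]
  | 1 => !![0, -Complex.I; Complex.I, 0]
  | 2 => !![1, 0; 0, -1]

/-- Functions on the phase space ℂ² × ℂ² are represented as functions `f z zb zt ztb` of the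
holomorphic coordinates `z, z̃` and the antiholomorphic coordinates `zb = z̄, ztb = z̃̄`. -/
def d1 (f : V → V → V → V → ℂ) (A : Fin 2) (z zb zt ztb : V) : ℂ :=
  fderiv ℂ (fun x => f x zb zt ztb) z (Pi.single A 1)
def d2 (f : V → V → V → V → ℂ) (A : Fin 2) (z zb zt ztb : V) : ℂ :=
  fderiv ℂ (fun x => f z x zt ztb) zb (Pi.single A 1)
def d3 (f : V → V → V → V → ℂ) (A : Fin 2) (z zb zt ztb : V) : ℂ :=
  fderiv ℂ (fun x => f z zb x ztb) zt (Pi.single A 1)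
def d4 (f : V → V → V → V → ℂ) (A : Fin 2) (z zb zt ztb : V) : ℂ :=
  fderiv ℂ (fun x => f z zb zt x) ztb (Pi.single A 1)

/-- Product Poisson bracket on ℂ² × ℂ²: `{z^A, z̄^B} = -i δ^{AB}`,
`{z̃^A, z̃̄^B} = -i δ^{AB}`, all cross brackets vanishing, extended as a biderivation. -/
def pb2 (f g : V → V → V → V → ℂ) (z zb zt ztb : V) : ℂ :=
  -Complex.I * ∑ A, (d1 f A z zb zt ztb * d2 g A z zb zt ztb
      - d1 g A z zb zt ztb * d2 f A z zb zt ztb)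
  + -Complex.I * ∑ A, (d3 f A z zb zt ztb * d4 g A z zb zt ztb
      - d3 g A z zb zt ztb * d4 f A z zb zt ztb)

/-- The area matching function `M = ⟨z|z⟩ − ⟨z̃|z̃⟩`. -/
def Mfun (z zb zt ztb : V) : ℂ := (∑ A, zb A * z A) - ∑ A, ztb A * zt A

/-- `X_i(z) = (1/2)⟨z|σ_i|z⟩`. -/
def Xfun (i : Fin 3) (z zb _zt _ztb : V) : ℂ :=
  (1 / 2 : ℂ) * ∑ A, ∑ B, zb A * pauli i A B * z B

/-- `X̃_i(z̃) = (1/2)⟨z̃|σ_i|z̃⟩`. -/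
def Xtfun (i : Fin 3) (_z _zb zt ztb : V) : ℂ :=
  (1 / 2 : ℂ) * ∑ A, ∑ B, ztb A * pauli i A B * zt B

/-- The matrix entries of `g(z,z̃) = (|z⟩[z̃| − |z]⟨z̃|)/√(⟨z|z⟩⟨z̃|z̃⟩)`, written as
holomorphic functions of `(z, z̄, z̃, z̃̄)` (the square root is the principal power `w^{1/2}`). -/
def gfun (A B : Fin 2) (z zb zt ztb : V) : ℂ :=
  (z A * ![-(zt 1), zt 0] B - ![-(zb 1), zb 0] A * ztb B) /
    (((∑ C, zb C * z C) * ∑ C, ztb C * zt C) ^ ((1 : ℂ) / 2))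

/-- The point of phase space with antiholomorphic coordinates equal to the conjugates. -/
def conjPt (f : V → V → V → V → ℂ) (z zt : V) : ℂ :=
  f z (fun A => (starRingEnd ℂ) (z A)) zt (fun A => (starRingEnd ℂ) (zt A))

/-- The squared norm `⟨z|z⟩` of a spinor. -/
def normsq (z : V) : ℝ := ∑ A, Complex.normSq (z A)

lemma fderiv_quot {N Dn : V → ℂ} {N' D' : V →L[ℂ] ℂ} {z : V} (v : V)
    (hN : HasFDerivAt N N' z) (hD : HasFDerivAt Dn D' z)
    (h0 : 0 < (Dn z).re) :
    fderiv ℂ (fun x => N x / Dn x ^ ((1:ℂ)/2)) z v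
      = Dn z ^ (-((1:ℂ)/2)) * N' v
        + N z * (-((1:ℂ)/2) * Dn z ^ (-((1:ℂ)/2) - 1)) * D' v := by
  have h0' : Dn z ∈ Complex.slitPlane := Complex.mem_slitPlane_iff.mpr (Or.inl h0)
  have hc : HasFDerivAt (fun x => Dn x ^ (-((1:ℂ)/2)))
      ((-((1:ℂ)/2) * Dn z ^ (-((1:ℂ)/2) - 1)) • D') z :=
    (Complex.hasStrictDerivAt_cpow_const h0').hasDerivAt.comp_hasFDerivAt z hD
  have hf := hN.fun_mul hc
  have heq : (fun x => N x / Dn x ^ ((1:ℂ)/2)) = fun x => N x * Dn x ^ (-((1:ℂ)/2)) := by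
    funext x; rw [Complex.cpow_neg, div_eq_mul_inv]
  rw [heq, hf.fderiv]
  simp only [ContinuousLinearMap.add_apply, ContinuousLinearMap.smul_apply, smul_eq_mul]
  ring

lemma cpow_negHalf (s : ℝ) (hs : 0 < s) : ((s:ℂ)*(s:ℂ)) ^ (-((1:ℂ)/2)) = ((s:ℂ))⁻¹ := by
  rw [← Complex.ofReal_mul]
  rw [show (-((1:ℂ)/2)) = ((-(1/2) : ℝ) : ℂ) by norm_num]
  rw [← Complex.ofReal_cpow (by positivity)]
  rw [show s * s = s ^ (2:ℝ) by rw [show (2:ℝ) = ((2:ℕ):ℝ) by norm_num, Real.rpow_natCast]; ring]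
  rw [← Real.rpow_mul hs.le]
  norm_num [Real.rpow_neg_one]

lemma cpow_negThreeHalf (s : ℝ) (hs : 0 < s) :
    ((s:ℂ)*(s:ℂ)) ^ (-((1:ℂ)/2) - 1) = ((s:ℂ))⁻¹ ^ 3 := by
  rw [← Complex.ofReal_mul]
  rw [show (-((1:ℂ)/2) - 1) = ((-(3/2) : ℝ) : ℂ) by norm_num]
  rw [← Complex.ofReal_cpow (by positivity)]
  rw [show s * s = s ^ (2:ℝ) by rw [show (2:ℝ) = ((2:ℕ):ℝ) by norm_num, Real.rpow_natCast]; ring]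
  rw [← Real.rpow_mul hs.le]
  rw [show (2:ℝ) * (-(3/2)) = ((-3 : ℤ) : ℝ) by norm_num]
  rw [Real.rpow_intCast]
  push_cast
  rw [_root_.zpow_neg]
  norm_num [inv_pow]

lemma d1_val (A B E : Fin 2) (z zb zt ztb : V) (s : ℝ) (hs : 0 < s)
    (hS : (∑ C, zb C * z C) = (s:ℂ)) (hT : (∑ C, ztb C * zt C) = (s:ℂ)) :
    d1 (gfun A B) E z zb zt ztb
      = ((s:ℂ))⁻¹ * (![-(zt 1), zt 0] B * (if A = E then 1 else 0))
        + (z A * ![-(zt 1), zt 0] B - ![-(zb 1), zb 0] A * ztb B)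
          * (-((1:ℂ)/2) * ((s:ℂ))⁻¹ ^ 3) * ((s:ℂ) * zb E) := by
  have hN : HasFDerivAt
      (fun x : V => x A * ![-(zt 1), zt 0] B - ![-(zb 1), zb 0] A * ztb B)
      ((![-(zt 1), zt 0] B : ℂ) • (ContinuousLinearMap.proj A : V →L[ℂ] ℂ)) z :=
    ((ContinuousLinearMap.proj A : V →L[ℂ] ℂ).hasFDerivAt.mul_const _).sub_const _
  have hD : HasFDerivAt
      (fun x : V => (∑ C, zb C * x C) * ∑ C, ztb C * zt C)
      ((∑ C, ztb C * zt C) • (∑ C : Fin 2, zb C • (ContinuousLinearMap.proj C : V →L[ℂ] ℂ))) z := by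
    have hsum : HasFDerivAt (fun x : V => ∑ C, zb C * x C)
        (∑ C : Fin 2, zb C • (ContinuousLinearMap.proj C : V →L[ℂ] ℂ)) z :=
      HasFDerivAt.fun_sum (fun C _ =>
        (ContinuousLinearMap.proj C : V →L[ℂ] ℂ).hasFDerivAt.const_mul (zb C))
    exact hsum.mul_const _
  have h0 : 0 < (((∑ C, zb C * z C) * ∑ C, ztb C * zt C)).re := by
    rw [hS, hT, ← Complex.ofReal_mul, Complex.ofReal_re]; positivity
  have := fderiv_quot (Pi.single E 1) hN hD h0
  rw [d1]
  simp only [gfun]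
  rw [this, hS, hT, cpow_negHalf s hs, cpow_negThreeHalf s hs]
  simp only [ContinuousLinearMap.smul_apply, ContinuousLinearMap.sum_apply,
    ContinuousLinearMap.proj_apply, Pi.single_apply, smul_eq_mul, mul_ite, mul_one, mul_zero,
    Finset.sum_ite_eq', Finset.mem_univ, if_true]

lemma d2_val (A B E : Fin 2) (z zb zt ztb : V) (s : ℝ) (hs : 0 < s)
    (hS : (∑ C, zb C * z C) = (s:ℂ)) (hT : (∑ C, ztb C * zt C) = (s:ℂ)) :
    d2 (gfun A B) E z zb zt ztb
      = ((s:ℂ))⁻¹ * (-(![-(if (1:Fin 2) = E then (1:ℂ) else 0),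
            if (0:Fin 2) = E then (1:ℂ) else 0] A * ztb B))
        + (z A * ![-(zt 1), zt 0] B - ![-(zb 1), zb 0] A * ztb B)
          * (-((1:ℂ)/2) * ((s:ℂ))⁻¹ ^ 3) * ((s:ℂ) * z E) := by
  have h0 : 0 < (((∑ C, zb C * z C) * ∑ C, ztb C * zt C)).re := by
    rw [hS, hT, ← Complex.ofReal_mul, Complex.ofReal_re]; positivity
  have hD : HasFDerivAt
      (fun x : V => (∑ C, x C * z C) * ∑ C, ztb C * zt C)
      ((∑ C, ztb C * zt C) • (∑ C : Fin 2, z C • (ContinuousLinearMap.proj C : V →L[ℂ] ℂ))) zb := by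
    have hsum : HasFDerivAt (fun x : V => ∑ C, x C * z C)
        (∑ C : Fin 2, z C • (ContinuousLinearMap.proj C : V →L[ℂ] ℂ)) zb := by
      exact HasFDerivAt.fun_sum (fun C _ =>
        ((ContinuousLinearMap.proj C : V →L[ℂ] ℂ).hasFDerivAt.mul_const (z C)))
    exact hsum.mul_const _
  fin_cases A
  · have hN : HasFDerivAt
        (fun x : V => z 0 * ![-(zt 1), zt 0] B - -(x 1) * ztb B)
        (-((ztb B : ℂ) • -(ContinuousLinearMap.proj (1 : Fin 2) : V →L[ℂ] ℂ))) zb :=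
      (((ContinuousLinearMap.proj (1 : Fin 2) : V →L[ℂ] ℂ).hasFDerivAt.neg.mul_const
        (ztb B)).const_sub _)
    have key := fderiv_quot (Pi.single E 1) hN hD h0
    rw [d2]
    simp only [gfun, Fin.mk_zero, Fin.mk_one, Matrix.cons_val_zero]
    rw [key, hS, hT, cpow_negHalf s hs, cpow_negThreeHalf s hs]
    simp only [ContinuousLinearMap.smul_apply, ContinuousLinearMap.sum_apply,
      ContinuousLinearMap.neg_apply, ContinuousLinearMap.proj_apply, Pi.single_apply,
      smul_eq_mul, mul_ite, mul_one, mul_zero, Finset.sum_ite_eq', Finset.mem_univ, if_true,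
      Fin.mk_zero, Fin.mk_one, Matrix.cons_val_zero]
    try (split_ifs <;> ring)
  · have hN : HasFDerivAt
        (fun x : V => z 1 * ![-(zt 1), zt 0] B - x 0 * ztb B)
        (-((ztb B : ℂ) • (ContinuousLinearMap.proj (0 : Fin 2) : V →L[ℂ] ℂ))) zb :=
      ((((ContinuousLinearMap.proj (0 : Fin 2) : V →L[ℂ] ℂ).hasFDerivAt.mul_const
        (ztb B))).const_sub _)
    have key := fderiv_quot (Pi.single E 1) hN hD h0
    rw [d2]
    simp only [gfun, Fin.mk_zero, Fin.mk_one, Matrix.cons_val_one, Matrix.head_cons, Matrix.cons_val_zero]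
    rw [key, hS, hT, cpow_negHalf s hs, cpow_negThreeHalf s hs]
    simp only [ContinuousLinearMap.smul_apply, ContinuousLinearMap.sum_apply,
      ContinuousLinearMap.neg_apply, ContinuousLinearMap.proj_apply, Pi.single_apply,
      smul_eq_mul, mul_ite, mul_one, mul_zero, Finset.sum_ite_eq', Finset.mem_univ, if_true,
      Fin.mk_zero, Fin.mk_one, Matrix.cons_val_one, Matrix.head_cons, Matrix.cons_val_zero]
    try (split_ifs <;> ring)

lemma d3_val (A B E : Fin 2) (z zb zt ztb : V) (s : ℝ) (hs : 0 < s)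
    (hS : (∑ C, zb C * z C) = (s:ℂ)) (hT : (∑ C, ztb C * zt C) = (s:ℂ)) :
    d3 (gfun A B) E z zb zt ztb
      = ((s:ℂ))⁻¹ * (z A * ![-(if (1:Fin 2) = E then (1:ℂ) else 0),
            if (0:Fin 2) = E then (1:ℂ) else 0] B)
        + (z A * ![-(zt 1), zt 0] B - ![-(zb 1), zb 0] A * ztb B)
          * (-((1:ℂ)/2) * ((s:ℂ))⁻¹ ^ 3) * ((s:ℂ) * ztb E) := by
  have h0 : 0 < (((∑ C, zb C * z C) * ∑ C, ztb C * zt C)).re := by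
    rw [hS, hT, ← Complex.ofReal_mul, Complex.ofReal_re]; positivity
  have hD : HasFDerivAt
      (fun x : V => (∑ C, zb C * z C) * ∑ C, ztb C * x C)
      ((∑ C, zb C * z C) • (∑ C : Fin 2, ztb C • (ContinuousLinearMap.proj C : V →L[ℂ] ℂ))) zt := by
    have hsum : HasFDerivAt (fun x : V => ∑ C, ztb C * x C)
        (∑ C : Fin 2, ztb C • (ContinuousLinearMap.proj C : V →L[ℂ] ℂ)) zt :=
      HasFDerivAt.fun_sum (fun C _ =>
        ((ContinuousLinearMap.proj C : V →L[ℂ] ℂ).hasFDerivAt.const_mul (ztb C)))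
    exact hsum.const_mul _
  fin_cases B
  · have hN : HasFDerivAt
        (fun x : V => z A * -(x 1) - ![-(zb 1), zb 0] A * ztb 0)
        ((z A : ℂ) • -(ContinuousLinearMap.proj (1 : Fin 2) : V →L[ℂ] ℂ)) zt :=
      (((ContinuousLinearMap.proj (1 : Fin 2) : V →L[ℂ] ℂ).hasFDerivAt.neg.const_mul
        (z A)).sub_const _)
    have key := fderiv_quot (Pi.single E 1) hN hD h0
    rw [d3]
    simp only [gfun, Fin.mk_zero, Fin.mk_one, Matrix.cons_val_zero]
    rw [key, hS, hT, cpow_negHalf s hs, cpow_negThreeHalf s hs]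
    simp only [ContinuousLinearMap.smul_apply, ContinuousLinearMap.sum_apply,
      ContinuousLinearMap.neg_apply, ContinuousLinearMap.proj_apply, Pi.single_apply,
      smul_eq_mul, mul_ite, mul_one, mul_zero, Finset.sum_ite_eq', Finset.mem_univ, if_true,
      Fin.mk_zero, Fin.mk_one, Matrix.cons_val_zero]
    try (split_ifs <;> ring)
  · have hN : HasFDerivAt
        (fun x : V => z A * x 0 - ![-(zb 1), zb 0] A * ztb 1)
        ((z A : ℂ) • (ContinuousLinearMap.proj (0 : Fin 2) : V →L[ℂ] ℂ)) zt :=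
      (((ContinuousLinearMap.proj (0 : Fin 2) : V →L[ℂ] ℂ).hasFDerivAt.const_mul
        (z A)).sub_const _)
    have key := fderiv_quot (Pi.single E 1) hN hD h0
    rw [d3]
    simp only [gfun, Fin.mk_zero, Fin.mk_one, Matrix.cons_val_one, Matrix.head_cons, Matrix.cons_val_zero]
    rw [key, hS, hT, cpow_negHalf s hs, cpow_negThreeHalf s hs]
    simp only [ContinuousLinearMap.smul_apply, ContinuousLinearMap.sum_apply,
      ContinuousLinearMap.neg_apply, ContinuousLinearMap.proj_apply, Pi.single_apply,
      smul_eq_mul, mul_ite, mul_one, mul_zero, Finset.sum_ite_eq', Finset.mem_univ, if_true,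
      Fin.mk_zero, Fin.mk_one, Matrix.cons_val_one, Matrix.head_cons, Matrix.cons_val_zero]
    try (split_ifs <;> ring)

lemma d4_val (A B E : Fin 2) (z zb zt ztb : V) (s : ℝ) (hs : 0 < s)
    (hS : (∑ C, zb C * z C) = (s:ℂ)) (hT : (∑ C, ztb C * zt C) = (s:ℂ)) :
    d4 (gfun A B) E z zb zt ztb
      = ((s:ℂ))⁻¹ * (-(![-(zb 1), zb 0] A * (if B = E then 1 else 0)))
        + (z A * ![-(zt 1), zt 0] B - ![-(zb 1), zb 0] A * ztb B)
          * (-((1:ℂ)/2) * ((s:ℂ))⁻¹ ^ 3) * ((s:ℂ) * zt E) := by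
  have h0 : 0 < (((∑ C, zb C * z C) * ∑ C, ztb C * zt C)).re := by
    rw [hS, hT, ← Complex.ofReal_mul, Complex.ofReal_re]; positivity
  have hD : HasFDerivAt
      (fun x : V => (∑ C, zb C * z C) * ∑ C, x C * zt C)
      ((∑ C, zb C * z C) • (∑ C : Fin 2, zt C • (ContinuousLinearMap.proj C : V →L[ℂ] ℂ))) ztb := by
    have hsum : HasFDerivAt (fun x : V => ∑ C, x C * zt C)
        (∑ C : Fin 2, zt C • (ContinuousLinearMap.proj C : V →L[ℂ] ℂ)) ztb :=
      HasFDerivAt.fun_sum (fun C _ =>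
        ((ContinuousLinearMap.proj C : V →L[ℂ] ℂ).hasFDerivAt.mul_const (zt C)))
    exact hsum.const_mul _
  have hN : HasFDerivAt
      (fun x : V => z A * ![-(zt 1), zt 0] B - ![-(zb 1), zb 0] A * x B)
      (-((![-(zb 1), zb 0] A : ℂ) • (ContinuousLinearMap.proj B : V →L[ℂ] ℂ))) ztb :=
    (((ContinuousLinearMap.proj B : V →L[ℂ] ℂ).hasFDerivAt.const_mul _).const_sub _)
  have key := fderiv_quot (Pi.single E 1) hN hD h0
  rw [d4]
  simp only [gfun]
  rw [key, hS, hT, cpow_negHalf s hs, cpow_negThreeHalf s hs]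
  simp only [ContinuousLinearMap.smul_apply, ContinuousLinearMap.sum_apply,
    ContinuousLinearMap.neg_apply, ContinuousLinearMap.proj_apply, Pi.single_apply,
    smul_eq_mul, mul_ite, mul_one, mul_zero, Finset.sum_ite_eq', Finset.mem_univ, if_true]
  try (split_ifs <;> ring)

set_option maxHeartbeats 4000000 in
/-- The matrix entries of `g` mutually Poisson-commute on the locus `⟨z|z⟩ = ⟨z̃|z̃⟩ ≠ 0`. -/
theorem stmt9 (z zt : V) (h : normsq z = normsq zt) (hz : normsq z ≠ 0)
    (A B C D : Fin 2) :
    conjPt (pb2 (gfun A B) (gfun C D)) z zt = 0 := by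
  have hs : 0 < normsq z := by
    rcases (Finset.sum_nonneg fun C _ => Complex.normSq_nonneg (z C)).lt_or_eq with h' | h'
    · exact h'
    · exact absurd h'.symm hz
  have hS : (∑ C, (starRingEnd ℂ) (z C) * z C) = ((normsq z : ℝ) : ℂ) := by
    rw [normsq, Complex.ofReal_sum]
    exact Finset.sum_congr rfl fun C _ => by rw [mul_comm, Complex.mul_conj]
  have hT : (∑ C, (starRingEnd ℂ) (zt C) * zt C) = ((normsq z : ℝ) : ℂ) := by
    rw [h, normsq, Complex.ofReal_sum]
    exact Finset.sum_congr rfl fun C _ => by rw [mul_comm, Complex.mul_conj]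
  have H1f := fun E => d1_val A B E z (fun A => (starRingEnd ℂ) (z A)) zt
    (fun A => (starRingEnd ℂ) (zt A)) (normsq z) hs hS hT
  have H1g := fun E => d1_val C D E z (fun A => (starRingEnd ℂ) (z A)) zt
    (fun A => (starRingEnd ℂ) (zt A)) (normsq z) hs hS hT
  have H2f := fun E => d2_val A B E z (fun A => (starRingEnd ℂ) (z A)) zt
    (fun A => (starRingEnd ℂ) (zt A)) (normsq z) hs hS hT
  have H2g := fun E => d2_val C D E z (fun A => (starRingEnd ℂ) (z A)) zt
    (fun A => (starRingEnd ℂ) (zt A)) (normsq z) hs hS hT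
  have H3f := fun E => d3_val A B E z (fun A => (starRingEnd ℂ) (z A)) zt
    (fun A => (starRingEnd ℂ) (zt A)) (normsq z) hs hS hT
  have H3g := fun E => d3_val C D E z (fun A => (starRingEnd ℂ) (z A)) zt
    (fun A => (starRingEnd ℂ) (zt A)) (normsq z) hs hS hT
  have H4f := fun E => d4_val A B E z (fun A => (starRingEnd ℂ) (z A)) zt
    (fun A => (starRingEnd ℂ) (zt A)) (normsq z) hs hS hT
  have H4g := fun E => d4_val C D E z (fun A => (starRingEnd ℂ) (z A)) zt
    (fun A => (starRingEnd ℂ) (zt A)) (normsq z) hs hS hT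
  have hvA : ∀ p q : ℂ, ![p, q] A
      = (if A = (0:Fin 2) then (1:ℂ) else 0) * p + (if A = (1:Fin 2) then (1:ℂ) else 0) * q := by
    fin_cases A <;> simp
  have hvB : ∀ p q : ℂ, ![p, q] B
      = (if B = (0:Fin 2) then (1:ℂ) else 0) * p + (if B = (1:Fin 2) then (1:ℂ) else 0) * q := by
    fin_cases B <;> simp
  have hvC : ∀ p q : ℂ, ![p, q] C
      = (if C = (0:Fin 2) then (1:ℂ) else 0) * p + (if C = (1:Fin 2) then (1:ℂ) else 0) * q := by
    fin_cases C <;> simp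
  have hvD : ∀ p q : ℂ, ![p, q] D
      = (if D = (0:Fin 2) then (1:ℂ) else 0) * p + (if D = (1:Fin 2) then (1:ℂ) else 0) * q := by
    fin_cases D <;> simp
  have hfA : z A = (if A = (0:Fin 2) then (1:ℂ) else 0) * z 0
      + (if A = (1:Fin 2) then (1:ℂ) else 0) * z 1 := by fin_cases A <;> simp
  have hfC : z C = (if C = (0:Fin 2) then (1:ℂ) else 0) * z 0
      + (if C = (1:Fin 2) then (1:ℂ) else 0) * z 1 := by fin_cases C <;> simp
  have hgB : (starRingEnd ℂ) (zt B) = (if B = (0:Fin 2) then (1:ℂ) else 0) * (starRingEnd ℂ) (zt 0)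
      + (if B = (1:Fin 2) then (1:ℂ) else 0) * (starRingEnd ℂ) (zt 1) := by fin_cases B <;> simp
  have hgD : (starRingEnd ℂ) (zt D) = (if D = (0:Fin 2) then (1:ℂ) else 0) * (starRingEnd ℂ) (zt 0)
      + (if D = (1:Fin 2) then (1:ℂ) else 0) * (starRingEnd ℂ) (zt 1) := by fin_cases D <;> simp
  have hSc := hS; have hTc := hT
  rw [Fin.sum_univ_two] at hSc hTc
  have hsu : ((normsq z : ℝ) : ℂ) * (((normsq z : ℝ) : ℂ))⁻¹ = 1 :=
    mul_inv_cancel₀ (by exact_mod_cast hz)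
  simp only [conjPt, pb2, H1f, H1g, H2f, H2g, H3f, H3g, H4f, H4g, Fin.sum_univ_two]
  simp only [Fin.reduceEq, reduceIte, neg_zero, neg_neg, mul_zero, zero_mul, mul_one, one_mul, add_zero, zero_add, sub_zero, zero_sub]
  simp only [hvA, hvB, hvC, hvD, hfA, hfC, hgB, hgD]
  linear_combination (-Complex.I * (((normsq z : ℝ) : ℂ))⁻¹^4 * ((normsq z : ℝ) : ℂ) * (((if C = (1:Fin 2) then (1:ℂ) else 0) * (if A = (0:Fin 2) then (1:ℂ) else 0) - (if C = (0:Fin 2) then (1:ℂ) else 0) * (if A = (1:Fin 2) then (1:ℂ) else 0)) * (((if B = (0:Fin 2) then (1:ℂ) else 0) * -(zt 1) + (if B = (1:Fin 2) then (1:ℂ) else 0) * zt 0) * ((if D = (0:Fin 2) then (1:ℂ) else 0) * (starRingEnd ℂ) (zt 0) + (if D = (1:Fin 2) then (1:ℂ) else 0) * (starRingEnd ℂ) (zt 1)) + ((if D = (0:Fin 2) then (1:ℂ) else 0) * -(zt 1) + (if D = (1:Fin 2) then (1:ℂ) else 0) * zt 0) * ((if B = (0:Fin 2) then (1:ℂ)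 else 0) * (starRingEnd ℂ) (zt 0) + (if B = (1:Fin 2) then (1:ℂ) else 0) * (starRingEnd ℂ) (zt 1))))) * hSc + (-Complex.I * (((normsq z : ℝ) : ℂ))⁻¹^4 * ((normsq z : ℝ) : ℂ) * (((if B = (1:Fin 2) then (1:ℂ) else 0) * (if D = (0:Fin 2) then (1:ℂ) else 0) - (if B = (0:Fin 2) then (1:ℂ) else 0) * (if D = (1:Fin 2) then (1:ℂ) else 0)) * (((if A = (0:Fin 2) then (1:ℂ) else 0) * z 0 + (if A = (1:Fin 2) then (1:ℂ) else 0) * z 1) * ((if C = (0:Fin 2) then (1:ℂ) else 0) * -((starRingEnd ℂ) (z 1)) + (if C = (1:Fin 2) then (1:ℂ) else 0) * (starRingEnd ℂ) (z 0)) + ((if C = (0:Fin 2) then (1:ℂ) else 0) * z 0 + (if C = (1:Fin 2) then (1:ℂ) else 0) * z 1) * ((if A = (0:Fin 2) then (1:ℂ) else 0) * -((starRingEnd ℂ) (z 1)) + (if A = (1:Fin 2) then (1:ℂ) else 0) * (starRingEnd ℂ) (z 0))))) * hTc + (-Complex.I * (((normsq z : ℝ) : ℂ))⁻¹^2 * ((((if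 C = (1:Fin 2) then (1:ℂ) else 0) * (if A = (0:Fin 2) then (1:ℂ) else 0) - (if C = (0:Fin 2) then (1:ℂ) else 0) * (if A = (1:Fin 2) then (1:ℂ) else 0)) * (((if B = (0:Fin 2) then (1:ℂ) else 0) * -(zt 1) + (if B = (1:Fin 2) then (1:ℂ) else 0) * zt 0) * ((if D = (0:Fin 2) then (1:ℂ) else 0) * (starRingEnd ℂ) (zt 0) + (if D = (1:Fin 2) then (1:ℂ) else 0) * (starRingEnd ℂ) (zt 1)) + ((if D = (0:Fin 2) then (1:ℂ) else 0) * -(zt 1) + (if D = (1:Fin 2) then (1:ℂ) else 0) * zt 0) * ((if B = (0:Fin 2) then (1:ℂ) else 0) * (starRingEnd ℂ) (zt 0) + (if B = (1:Fin 2) then (1:ℂ) else 0) * (starRingEnd ℂ) (zt 1)))) + (((if B = (1:Fin 2) then (1:ℂ) else 0) * (if D = (0:Fin 2) then (1:ℂ) else 0) - (if B = (0:Fin 2) then (1:ℂ) else 0) * (if D = (1:Fin 2) then (1:ℂ) else 0)) * (((if A = (0:Fin 2) then (1:ℂ) else 0) * z 0 + (if A = (1:Fin 2) then (1:ℂ)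 else 0) * z 1) * ((if C = (0:Fin 2) then (1:ℂ) else 0) * -((starRingEnd ℂ) (z 1)) + (if C = (1:Fin 2) then (1:ℂ) else 0) * (starRingEnd ℂ) (z 0)) + ((if C = (0:Fin 2) then (1:ℂ) else 0) * z 0 + (if C = (1:Fin 2) then (1:ℂ) else 0) * z 1) * ((if A = (0:Fin 2) then (1:ℂ) else 0) * -((starRingEnd ℂ) (z 1)) + (if A = (1:Fin 2) then (1:ℂ) else 0) * (starRingEnd ℂ) (z 0))))) * (((normsq z : ℝ) : ℂ) * (((normsq z : ℝ) : ℂ))⁻¹ + 1)) * hsu
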